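/- The normalized partition function x^{−δ}·Z_λ(x|a), where x^δ = x_1^0 x_2^1 ⋯ x_n^{n−1}, is a symmetric function of x_1,…,x_n. -/

import Mathlib

/-!
The partition function is an entry of the product `T(x₁) ⋯ T(xₙ)` of row transfer matrices.
The Yang–Baxter relation `R M(u,w) = M(w,u) R`, where `M(u,w)` is the matrix of a column of two
vertices with row parameters `u` over `w`, propagated along a row and read off at the boundary
states, gives the exchange relation `u • T(u) T(w) = w • T(w) T(u)`. Hence the weighted product
`∏ xᵢ^(n-1-i) • T(xᵢ)` is invariant under every permutation of the `xᵢ`, and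
`x^{-δ} = (x₁ ⋯ xₙ)^{-(n-1)} · x^{(n-1)-δ}` with a symmetric first factor.
-/

/-- Exactly two of the four Booleans are `true` (the six-vertex/ice admissibility condition). -/
abbrev ExactlyTwo (a b c d : Bool) : Prop :=
  ((cond a 1 0) + (cond b 1 0) + (cond c 1 0) + (cond d 1 0) : ℕ) = 2

/-- Boltzmann weight of a rectilinear vertex on a row with parameter `x` in a column with
parameter `a`; `W N E S` record the presence of a hydrogen atom at the west, north, east,
south positions adjacent to the vertex.  The vertical molecule gets `x/a`, the molecule with
hydrogens north and west gets `x/a - 1`, the other admissible molecules get `1`, and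
inadmissible configurations get `0`. -/
noncomputable def rectWeight {K : Type*} [Field K] (x a : K) (W N E S : Bool) : K :=
  if W = true ∧ N = true ∧ E = false ∧ S = false then x / a - 1
  else if N = true ∧ S = true ∧ W = false ∧ E = false then x / a
  else if ExactlyTwo W N E S then 1 else 0

/-- A (pre-)state of the six-vertex model on an `n × m` grid of vertices: `s.1 i j = true`
iff the hydrogen of the horizontal edge west of the vertex in row `i`, column `j` sits at its
east end (`j = 0` and `j = m` are the boundary half-edges), and `s.2 i j = true` iff the
hydrogen of the vertical edge north of the vertex in row `i`, column `j` sits at its south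
end (`i = 0` and `i = n` are the boundary half-edges). -/
abbrev IceState (n m : ℕ) := (Fin n → Fin (m + 1) → Bool) × (Fin (n + 1) → Fin m → Bool)

/-- Hydrogen adjacent to the west of vertex `(i,j)`. -/
def occW {n m : ℕ} (s : IceState n m) (i : Fin n) (j : Fin m) : Bool := s.1 i j.castSucc
/-- Hydrogen adjacent to the east of vertex `(i,j)`. -/
def occE {n m : ℕ} (s : IceState n m) (i : Fin n) (j : Fin m) : Bool := !(s.1 i j.succ)
/-- Hydrogen adjacent to the north of vertex `(i,j)`. -/
def occN {n m : ℕ} (s : IceState n m) (i : Fin n) (j : Fin m) : Bool := s.2 i.castSucc j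
/-- Hydrogen adjacent to the south of vertex `(i,j)`. -/
def occS {n m : ℕ} (s : IceState n m) (i : Fin n) (j : Fin m) : Bool := !(s.2 i.succ j)

/-- Admissibility and the `λ`-boundary conditions: every vertex has exactly two adjacent
hydrogens; the left and right boundaries are filled with hydrogens; the lower boundary is
devoid of hydrogens; and the top boundary has hydrogens exactly away from the (`1`-based)
columns `λ_i + n + 1 - i`. -/
abbrev IsAdmissible (n m : ℕ) (lam : Fin n → ℕ) (s : IceState n m) : Prop :=
  (∀ (i : Fin n) (j : Fin m), ExactlyTwo (occW s i j) (occN s i j) (occE s i j) (occS s i j)) ∧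
  (∀ i : Fin n, s.1 i 0 = true) ∧
  (∀ i : Fin n, s.1 i (Fin.last m) = false) ∧
  (∀ j : Fin m, s.2 (Fin.last n) j = true) ∧
  (∀ j : Fin m, s.2 0 j = true ↔ ∀ i : Fin n, (j : ℕ) + 1 ≠ lam i + (n - (i : ℕ)))

/-- Generalized six-vertex partition function with `λ`-boundary conditions: the sum over all
admissible states of the product over all vertices of an arbitrary local weight `w`,
depending on the row, the column, and the local configuration `W N E S` of hydrogens. -/
noncomputable def ZPFgen (n m : ℕ) (lam : Fin n → ℕ) {R : Type*} [CommRing R]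
    (w : Fin n → Fin m → Bool → Bool → Bool → Bool → R) : R :=
  ∑ s ∈ Finset.univ.filter (IsAdmissible n m lam),
    ∏ i : Fin n, ∏ j : Fin m, w i j (occW s i j) (occN s i j) (occE s i j) (occS s i j)

/-- The six-vertex partition function `Z_λ(x|a)` with `λ`-boundary conditions and Boltzmann
weights `x_i/a_j` (vertical molecule), `x_i/a_j - 1` (hydrogens north and west), `1`
(otherwise), on an `n × m` grid (columns `1`-based: column `j : Fin m` has parameter
`a (j+1)`). -/
noncomputable def ZPF (n m : ℕ) (lam : Fin n → ℕ) {K : Type*} [Field K]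
    (x : Fin n → K) (a : ℤ → K) : K :=
  ZPFgen n m lam (fun i j W N E S => rectWeight (x i) (a ((j : ℤ) + 1)) W N E S)

open scoped Kronecker

theorem Matrix.list_prod_ofFn_apply {S R : Type*} [Fintype S] [DecidableEq S] [CommSemiring R]
    {m : ℕ} (M : Fin m → Matrix S S R) (s t : S) :
    (List.ofFn M).prod s t = ∑ p : Fin (m + 1) → S,
      if p 0 = s ∧ p (Fin.last m) = t then ∏ j, M j (p j.castSucc) (p j.succ) else 0 := by
  induction m generalizing s with
  | zero =>
    rw [List.ofFn_zero, List.prod_nil, ← (Equiv.funUnique (Fin 1) S).symm.sum_comp]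
    simp [Matrix.one_apply, ite_and, eq_comm]
  | succ m ih =>
    rw [List.ofFn_succ, List.prod_cons, Matrix.mul_apply,
      ← (Fin.consEquiv fun _ => S).sum_comp, Fintype.sum_prod_type]
    simp only [ih, Finset.mul_sum, Fin.consEquiv_apply, Fin.cons_zero, ← Fin.succ_last,
      Fin.cons_succ, Fin.prod_univ_succ, Fin.castSucc_zero, ← Fin.succ_castSucc, ite_and,
      mul_ite, mul_zero]
    rw [Finset.sum_comm]
    simp

theorem SemiconjBy.list_prod_ofFn {M : Type*} [Monoid M] {a : M} {m : ℕ} {x y : Fin m → M}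
    (h : ∀ j, SemiconjBy a (x j) (y j)) :
    SemiconjBy a (List.ofFn x).prod (List.ofFn y).prod := by
  induction m with
  | zero => exact SemiconjBy.one_right a
  | succ m ih =>
    simpa only [List.ofFn_succ, List.prod_cons] using (h 0).mul_right (ih fun j => h j.succ)

theorem List.prod_ofFn_sum {R ι : Type*} [Semiring R] [Fintype ι] {m : ℕ}
    (F : Fin m → ι → R) :
    (List.ofFn fun j => ∑ c, F j c).prod =
      ∑ c : Fin m → ι, (List.ofFn fun j => F j (c j)).prod := by
  induction m with
  | zero => simp
  | succ m ih =>
    rw [List.ofFn_succ, List.prod_cons, ih, Finset.sum_mul_sum,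
      ← (Fin.consEquiv fun _ => ι).sum_comp, Fintype.sum_prod_type]
    simp [List.ofFn_succ]

theorem Matrix.list_prod_ofFn_kronecker {l n R : Type*} [Fintype l] [Fintype n] [DecidableEq l]
    [DecidableEq n] [CommSemiring R] {m : ℕ} (A : Fin m → Matrix l l R) (B : Fin m → Matrix n n R) :
    (List.ofFn fun j => A j ⊗ₖ B j).prod = (List.ofFn A).prod ⊗ₖ (List.ofFn B).prod := by
  induction m with
  | zero => simp
  | succ m ih => simp only [List.ofFn_succ, List.prod_cons, ih, Matrix.mul_kronecker_mul]

section WeightedProd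

variable {R A : Type*} [CommSemiring R] [Semiring A] [Algebra R A]

def weightedProd (T : R → A) : List R → A
  | [] => 1
  | u :: l => u ^ l.length • (T u * weightedProd T l)

theorem weightedProd_perm {T : R → A} (hT : ∀ u w, u • (T u * T w) = w • (T w * T u))
    {l₁ l₂ : List R} (h : l₁.Perm l₂) : weightedProd T l₁ = weightedProd T l₂ := by
  induction h with
  | nil => rfl
  | cons u hl ih => simp only [weightedProd, ih, hl.length_eq]
  | swap u w l =>
    have key : ∀ u w : R, weightedProd T (u :: w :: l) =
        (u ^ l.length * w ^ l.length) • ((u • (T u * T w)) * weightedProd T l) := by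
      intro u w
      simp only [weightedProd, List.length_cons, pow_succ, mul_smul_comm, smul_mul_assoc,
        smul_smul, mul_assoc]
      ring_nf
    rw [key, key, hT, mul_comm (u ^ _)]
  | trans _ _ ih₁ ih₂ => exact ih₁.trans ih₂

theorem weightedProd_ofFn (T : R → A) {n : ℕ} (y : Fin n → R) :
    weightedProd T (List.ofFn y) =
      (∏ i, y i ^ (n - 1 - i)) • (List.ofFn fun i => T (y i)).prod := by
  induction n with
  | zero => simp [weightedProd]
  | succ n ih =>
    simp only [List.ofFn_succ, weightedProd, List.length_ofFn, ih, Fin.prod_univ_succ,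
      List.prod_cons, mul_smul_comm, smul_smul, Fin.val_zero, Fin.val_succ]
    congr 2
    refine Finset.prod_congr rfl fun i _ => ?_
    congr 1
    omega

end WeightedProd

section SixVertex

variable {K : Type*} [Field K]

theorem rectWeight_eq_zero {x a : K} {W N E S : Bool} (h : ¬ ExactlyTwo W N E S) :
    rectWeight x a W N E S = 0 := by
  revert h; cases W <;> cases N <;> cases E <;> cases S <;> simp [rectWeight]

/-- Rows and columns are the states of the horizontal edges west and east of the vertex, `t` and
`b` those of the vertical edges north and south, all in the encoding of `IceState`. -/
noncomputable def vertexMatrix (u α : K) (t b : Bool) : Matrix Bool Bool K :=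
  Matrix.of fun p p' => rectWeight u α p t (!p') (!b)

noncomputable def rowTransfer (m : ℕ) (u : K) (α : Fin m → K) :
    Matrix (Fin m → Bool) (Fin m → Bool) K :=
  Matrix.of fun t b => (List.ofFn fun j => vertexMatrix u (α j) (t j) (b j)).prod true false

theorem rowTransfer_apply (m : ℕ) (u : K) (α : Fin m → K) (t b : Fin m → Bool) :
    rowTransfer m u α t b = ∑ h : Fin (m + 1) → Bool,
      if h 0 = true ∧ h (Fin.last m) = false then
        ∏ j, rectWeight u (α j) (h j.castSucc) (t j) (!h j.succ) (!b j) else 0 :=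
  Matrix.list_prod_ofFn_apply _ _ _

end SixVertex

section Exchange

variable {K : Type*} [Field K]

noncomputable def doubleVertexMatrix (u w α : K) (t b : Bool) :
    Matrix (Bool × Bool) (Bool × Bool) K :=
  ∑ c, vertexMatrix u α t c ⊗ₖ vertexMatrix w α c b

def rMatrix (u w : K) : Matrix (Bool × Bool) (Bool × Bool) K :=
  Matrix.of fun p q =>
    if p = q then (if p.1 then u else w)
    else if p = (true, false) ∧ q = (false, true) then w - u else 0

theorem rMatrix_mul_doubleVertexMatrix (u w α : K) (t b : Bool) :
    rMatrix u w * doubleVertexMatrix u w α t b = doubleVertexMatrix w u α t b * rMatrix u w := by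
  ext ⟨p, q⟩ ⟨p', q'⟩
  simp only [Matrix.mul_apply, Fintype.sum_prod_type, Fintype.sum_bool, doubleVertexMatrix,
    Matrix.add_apply, Matrix.kronecker_apply, vertexMatrix, rMatrix, Matrix.of_apply]
  cases p <;> cases q <;> cases p' <;> cases q' <;> cases t <;> cases b <;>
    simp [rectWeight, ExactlyTwo] <;> ring

theorem rowTransfer_mul_apply (m : ℕ) (u w : K) (α : Fin m → K) (t b : Fin m → Bool) :
    (rowTransfer m u α * rowTransfer m w α) t b =
      (List.ofFn fun j => doubleVertexMatrix u w (α j) (t j) (b j)).prod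
        (true, true) (false, false) := by
  simp only [doubleVertexMatrix, List.prod_ofFn_sum, Matrix.sum_apply,
    Matrix.list_prod_ofFn_kronecker, Matrix.kronecker_apply, Matrix.mul_apply, rowTransfer,
    Matrix.of_apply]

theorem smul_rowTransfer_mul_comm (m : ℕ) (u w : K) (α : Fin m → K) :
    u • (rowTransfer m u α * rowTransfer m w α) = w • (rowTransfer m w α * rowTransfer m u α) := by
  ext t b
  have h : rMatrix u w * (List.ofFn fun j => doubleVertexMatrix u w (α j) (t j) (b j)).prod =
      (List.ofFn fun j => doubleVertexMatrix w u (α j) (t j) (b j)).prod * rMatrix u w :=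
    SemiconjBy.list_prod_ofFn fun j => rMatrix_mul_doubleVertexMatrix u w (α j) (t j) (b j)
  replace h := congrFun₂ h (true, true) (false, false)
  -- In the row of `(true, true)` and the column of `(false, false)`, `rMatrix u w` is zero
  -- off the diagonal, with diagonal entries `u` and `w` respectively.
  simp only [Matrix.mul_apply, Fintype.sum_prod_type, Fintype.sum_bool, rMatrix, Matrix.of_apply]
    at h
  simp only [Matrix.smul_apply, smul_eq_mul, rowTransfer_mul_apply]
  simpa [mul_comm] using h

end Exchange

section TransferMatrix

variable {K : Type*} [Field K]

def topBoundary (n m : ℕ) (lam : Fin n → ℕ) : Fin m → Bool :=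
  fun j => decide (∀ i : Fin n, (j : ℕ) + 1 ≠ lam i + (n - (i : ℕ)))

theorem isAdmissible_iff (n m : ℕ) (lam : Fin n → ℕ) (s : IceState n m) :
    IsAdmissible n m lam s ↔
      (∀ i j, ExactlyTwo (occW s i j) (occN s i j) (occE s i j) (occS s i j)) ∧
        (∀ i, s.1 i 0 = true ∧ s.1 i (Fin.last m) = false) ∧
        s.2 0 = topBoundary n m lam ∧ s.2 (Fin.last n) = fun _ => true := by
  have htop : s.2 0 = topBoundary n m lam ↔
      ∀ j, (s.2 0 j = true ↔ ∀ i : Fin n, (j : ℕ) + 1 ≠ lam i + (n - i)) :=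
    funext_iff.trans <| forall_congr' fun j => by
      rw [topBoundary, Bool.eq_iff_iff, decide_eq_true_iff]
  simp only [IsAdmissible, htop, funext_iff, forall_and]
  tauto

theorem ZPF_eq_list_prod_rowTransfer_apply (n m : ℕ) (lam : Fin n → ℕ) (x : Fin n → K)
    (a : ℤ → K) :
    ZPF n m lam x a = (List.ofFn fun i => rowTransfer m (x i) fun j => a ((j : ℤ) + 1)).prod
      (topBoundary n m lam) (fun _ => true) := by
  classical
  set w : IceState n m → K := fun s => ∏ i, ∏ j : Fin m,
    rectWeight (x i) (a ((j : ℤ) + 1)) (occW s i j) (occN s i j) (occE s i j) (occS s i j)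
  have hw : ∀ s, (if IsAdmissible n m lam s then w s else 0) =
      if (∀ i, s.1 i 0 = true ∧ s.1 i (Fin.last m) = false) ∧
        s.2 0 = topBoundary n m lam ∧ s.2 (Fin.last n) = (fun _ => true) then w s else 0 := by
    intro s
    by_cases hice : ∀ i j, ExactlyTwo (occW s i j) (occN s i j) (occE s i j) (occS s i j)
    · simp only [isAdmissible_iff]
      simp only [and_iff_right hice]
    · obtain ⟨i, j, hij⟩ := by push Not at hice; exact hice
      have hw0 : w s = 0 := Finset.prod_eq_zero (Finset.mem_univ i)
        (Finset.prod_eq_zero (Finset.mem_univ j) (rectWeight_eq_zero hij))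
      simp [isAdmissible_iff, hice, hw0]
  rw [ZPF, ZPFgen, Finset.sum_filter, Fintype.sum_prod_type, Finset.sum_comm,
    Matrix.list_prod_ofFn_apply]
  refine Finset.sum_congr rfl fun v _ => (Finset.sum_congr rfl fun h _ => hw (h, v)).trans ?_
  by_cases hv : v 0 = topBoundary n m lam ∧ v (Fin.last n) = fun _ => true
  · simp only [hv, and_true, if_true, rowTransfer_apply, Fintype.prod_sum, Fintype.prod_ite_zero]
    exact Finset.sum_congr rfl fun h _ => by split_ifs <;> rfl
  · simp [hv]

end TransferMatrix

theorem inv_prod_pow_val_mul {K : Type*} [Field K] {n : ℕ} {y : Fin n → K} (hy : ∀ i, y i ≠ 0)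
    (c : K) :
    (∏ i, y i ^ (i : ℕ))⁻¹ * c = ((∏ i, y i) ^ (n - 1))⁻¹ * ((∏ i, y i ^ (n - 1 - i)) * c) := by
  have hsplit : (∏ i, y i ^ (i : ℕ)) * ∏ i, y i ^ (n - 1 - i) = (∏ i, y i) ^ (n - 1) := by
    rw [← Finset.prod_mul_distrib, ← Finset.prod_pow]
    exact Finset.prod_congr rfl fun i _ => by rw [← pow_add]; congr 1; omega
  have hne : ∏ i, y i ^ (n - 1 - i) ≠ 0 :=
    Finset.prod_ne_zero_iff.mpr fun i _ => pow_ne_zero _ (hy i)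
  rw [← hsplit, mul_inv, mul_assoc, inv_mul_cancel_left₀ hne]

theorem stmt9 {K : Type*} [Field K] (n : ℕ) (hn : 0 < n)
    (lam : Fin n → ℕ)
    (x : Fin n → K) (a : ℤ → K) (hx : ∀ i, x i ≠ 0)
    (σ : Equiv.Perm (Fin n)) :
    (∏ i : Fin n, (x ∘ σ) i ^ (i : ℕ))⁻¹ * ZPF n (n + lam ⟨0, hn⟩) lam (x ∘ σ) a =
      (∏ i : Fin n, x i ^ (i : ℕ))⁻¹ * ZPF n (n + lam ⟨0, hn⟩) lam x a := by
  set m := n + lam ⟨0, hn⟩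
  have hsymm := congrFun₂ <| weightedProd_perm
    (smul_rowTransfer_mul_comm m · · fun j => a ((j : ℤ) + 1)) (σ.ofFn_comp_perm x)
  simp only [weightedProd_ofFn, Matrix.smul_apply, smul_eq_mul, Function.comp_apply] at hsymm
  rw [ZPF_eq_list_prod_rowTransfer_apply, ZPF_eq_list_prod_rowTransfer_apply,
    inv_prod_pow_val_mul (y := x ∘ σ) fun i => hx _, inv_prod_pow_val_mul hx, Function.comp_def,
    Equiv.prod_comp σ x, hsymm]
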